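/- Local well-posedness of the discrete nonlinear Schrödinger equation in l^p_h: Let d ≥ 1, h > 0, σ > 0, λ ∈ {1,−1}, 1 ≤ p ≤ ∞, and let V = {V_n} ∈ l^∞_h be a bounded real-valued potential. For every u_0 ∈ l^p_h there exists T > 0, depending only on d, h, σ, p, ‖V‖_{l^∞_h} and ‖u_0‖_{l^p_h}, such that: (i) there exists a continuously differentiable map u : [−T,T] → l^p_h with u(0) = u_0 satisfying, for all t ∈ [−T,T] and all n ∈ hℤ^d, i u_n'(t) − (Δ_h u(t))_n + V_n u_n(t) + λ|u_n(t)|^{2σ} u_n(t) = 0; (ii) this solution is unique among continuously differentiable maps [−T,T] → l^p_h; (iii) for every R > 0 there exist T = T(R) > 0 and L > 0 such that any two such solutions u, v on [−T,T] with initial data u_0, v_0 of l^p_h-norm at most R satisfy sup_{|t| ≤ T} ‖u(t) − v(t)‖_{l^p_h} ≤ L ‖u_0 − v_0‖_{l^p_h}. -/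

import Mathlib

noncomputable section

open scoped ENNReal

/-- The integer lattice indexing `hℤ^d` (the point `n ∈ hℤ^d` corresponds to `h • n`). -/
abbrev ZLat (d : ℕ) := Fin d → ℤ

/-- The `j`-th standard basis vector of the lattice. -/
def latE {d : ℕ} (j : Fin d) : ZLat d := Pi.single j 1

/-- The discrete Laplacian `Δ_h` on `ℂ`-valued sequences on `hℤ^d`, acting pointwise:
`(Δ_h u)_n = h⁻² Σ_j (u_{n+he_j} + u_{n−he_j} − 2u_n)`. -/
def discLapC (d : ℕ) (h : ℝ) (u : ZLat d → ℂ) : ZLat d → ℂ :=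
  fun n => (∑ j : Fin d, (u (n + latE j) + u (n - latE j) - 2 * u n)) / (h : ℂ) ^ 2

/-- `u : ℝ → l^p_h` is a continuously differentiable solution (with derivative `u'`) of the
discrete nonlinear Schrödinger equation
`i u_n'(t) − (Δ_h u(t))_n + V_n u_n(t) + λ |u_n(t)|^{2σ} u_n(t) = 0` on the set `S ⊆ ℝ`. -/
def IsDNLSSolutionOn (d : ℕ) (h σ lam : ℝ) (V : ZLat d → ℝ) (p : ℝ≥0∞) [Fact (1 ≤ p)]
    (S : Set ℝ) (u u' : ℝ → lp (fun _ : ZLat d => ℂ) p) : Prop :=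
  (∀ t ∈ S, HasDerivWithinAt u (u' t) S t) ∧ ContinuousOn u' S ∧
    ∀ t ∈ S, ∀ n : ZLat d,
      Complex.I * (u' t : ZLat d → ℂ) n - discLapC d h (⇑(u t)) n
          + (V n : ℂ) * (u t : ZLat d → ℂ) n
          + (lam : ℂ) * ((‖(u t : ZLat d → ℂ) n‖ ^ (2 * σ) : ℝ) : ℂ)
            * (u t : ZLat d → ℂ) n = 0

/-!
Solved for `u'`, the DNLS is the autonomous ODE `u' = F u` on the Banach space `ℓ^p`, with
`F u = -i (Δ_h u - V u - λ |u|^{2σ} u)` and `F 0 = 0`. The linear part is bounded, since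
translations are isometries of `ℓ^p`, and `z ↦ |z|^{2σ} z` is Lipschitz on balls of `ℂ`, hence acts
coordinatewise as a map Lipschitz on balls of `ℓ^p`. So `F` is Lipschitz, with constant `K`, on the
ball of radius `2R`, and bounded there by `2KR`. For `T = R / (2KR + 1)`, Picard–Lindelöf gives a
solution on `[-T, T]` from any datum of norm `≤ R`; a barrier argument keeps every solution with
such a datum inside the ball of radius `2R` up to time `T`, where Grönwall's inequality bounds
`‖u t - v t‖` by `exp (K T) ‖u 0 - v 0‖`, which gives uniqueness and Lipschitz dependence.
-/

open scoped NNReal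
open Set Metric Real

theorem rpow_sub_rpow_le_mul_sub {q r x y : ℝ} (hq : 1 ≤ q) (hy : 0 ≤ y) (hyx : y ≤ x)
    (hxr : x ≤ r) : x ^ q - y ^ q ≤ q * r ^ (q - 1) * (x - y) := by
  have hderiv (t : ℝ) : HasDerivAt (fun t ↦ t ^ q) (q * t ^ (q - 1)) t :=
    hasDerivAt_rpow_const (Or.inr hq)
  refine (convex_Icc 0 r).image_sub_le_mul_sub_of_deriv_le
    (fun t _ ↦ (hderiv t).continuousAt.continuousWithinAt)
    (fun t _ ↦ (hderiv t).differentiableAt.differentiableWithinAt) (fun t ht ↦ ?_)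
    y ⟨hy, hyx.trans hxr⟩ x ⟨hy.trans hyx, hxr⟩ hyx
  rw [interior_Icc] at ht
  rw [(hderiv t).deriv]
  exact mul_le_mul_of_nonneg_left (rpow_le_rpow ht.1.le ht.2.le (by linarith)) (by linarith)

theorem norm_rpow_smul_sub_norm_rpow_smul_le {E : Type*} [NormedAddCommGroup E]
    [NormedSpace ℝ E] {s r : ℝ} (hs : 0 ≤ s) {a b : E} (ha : ‖a‖ ≤ r) (hb : ‖b‖ ≤ r) :
    ‖‖a‖ ^ s • a - ‖b‖ ^ s • b‖ ≤ (s + 2) * r ^ s * ‖a - b‖ := by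
  wlog hba : ‖b‖ ≤ ‖a‖ generalizing a b
  · rw [norm_sub_rev, norm_sub_rev a]
    exact this hb ha (le_of_not_ge hba)
  have hr : 0 ≤ r := (norm_nonneg a).trans ha
  have hsplit : ‖a‖ ^ s • a - ‖b‖ ^ s • b = ‖a‖ ^ s • (a - b) + (‖a‖ ^ s - ‖b‖ ^ s) • b := by
    rw [smul_sub, sub_smul]; abel
  have hmono : ‖b‖ ^ s ≤ ‖a‖ ^ s := rpow_le_rpow (norm_nonneg b) hba hs
  -- the second term is then controlled by the mean value theorem for `t ↦ t ^ (s + 1)`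
  have hpow : (‖a‖ ^ s - ‖b‖ ^ s) * ‖b‖ ≤ ‖a‖ ^ (s + 1) - ‖b‖ ^ (s + 1) := by
    rw [rpow_add_one' (norm_nonneg a) (by linarith), rpow_add_one' (norm_nonneg b) (by linarith)]
    nlinarith [rpow_nonneg (norm_nonneg a) s]
  have hmvt := rpow_sub_rpow_le_mul_sub (q := s + 1) (by linarith) (norm_nonneg b) hba ha
  rw [add_sub_cancel_right] at hmvt
  calc ‖‖a‖ ^ s • a - ‖b‖ ^ s • b‖
      ≤ ‖a‖ ^ s * ‖a - b‖ + (‖a‖ ^ s - ‖b‖ ^ s) * ‖b‖ := by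
        rw [hsplit]
        refine (norm_add_le _ _).trans_eq ?_
        rw [norm_smul, norm_smul, norm_of_nonneg (by positivity),
          norm_of_nonneg (sub_nonneg.2 hmono)]
    _ ≤ r ^ s * ‖a - b‖ + (s + 1) * r ^ s * (‖a‖ - ‖b‖) :=
        add_le_add (mul_le_mul_of_nonneg_right (rpow_le_rpow (norm_nonneg a) ha hs)
          (norm_nonneg _)) (hpow.trans hmvt)
    _ ≤ (s + 2) * r ^ s * ‖a - b‖ := by
        have := mul_le_mul_of_nonneg_left (norm_sub_norm_le a b)
          (mul_nonneg (by linarith : 0 ≤ s + 1) (rpow_nonneg hr s))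
        linarith

theorem exists_lipschitzOnWith_norm_rpow_smul {E : Type*} [NormedAddCommGroup E]
    [NormedSpace ℝ E] {s : ℝ} (hs : 0 ≤ s) (r : ℝ) :
    ∃ K, LipschitzOnWith K (fun z : E ↦ ‖z‖ ^ s • z) (closedBall 0 r) :=
  ⟨_, LipschitzOnWith.of_dist_le' fun a ha b hb ↦ by
    simpa only [dist_eq_norm] using norm_rpow_smul_sub_norm_rpow_smul_le hs
      (mem_closedBall_zero_iff.1 ha) (mem_closedBall_zero_iff.1 hb)⟩

theorem LipschitzOnWith.norm_le_mul_norm {E F : Type*} [SeminormedAddCommGroup E]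
    [SeminormedAddCommGroup F] {g : E → F} {K : ℝ≥0} {r : ℝ}
    (hg : LipschitzOnWith K g (closedBall 0 r)) (hg0 : g 0 = 0) {x : E} (hx : ‖x‖ ≤ r) :
    ‖g x‖ ≤ K * ‖x‖ := by
  simpa [hg0] using hg.norm_sub_le (mem_closedBall_zero_iff.2 hx)
    (mem_closedBall_self ((norm_nonneg x).trans hx))

theorem Memℓp.comp_equiv {α β E : Type*} [NormedAddCommGroup E] {p : ℝ≥0∞} {f : α → E}
    (hf : Memℓp f p) (e : β ≃ α) : Memℓp (f ∘ e) p := by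
  obtain rfl | rfl | hp := p.trichotomy
  · rw [memℓp_zero_iff] at hf ⊢
    exact hf.preimage e.injective.injOn
  · rw [memℓp_infty_iff] at hf ⊢
    rwa [← e.surjective.range_comp] at hf
  · rw [memℓp_gen_iff hp] at hf ⊢
    exact e.summable_iff.2 hf

theorem Memℓp.comp_of_lipschitzOnWith {α E : Type*} [NormedAddCommGroup E] {p : ℝ≥0∞}
    {f : α → E} (hf : Memℓp f p) {g : E → E} {K : ℝ≥0} {r : ℝ}
    (hg : LipschitzOnWith K g (closedBall 0 r)) (hg0 : g 0 = 0) (hfr : ∀ i, ‖f i‖ ≤ r) :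
    Memℓp (g ∘ f) p :=
  hf.norm.const_mul (K : ℝ) |>.mono fun i ↦ hg.norm_le_mul_norm hg0 (hfr i)

namespace lp

variable {α β E : Type*} [NormedAddCommGroup E] {p : ℝ≥0∞} [Fact (1 ≤ p)]

theorem norm_le_mul_of_forall_norm_le {x y : lp (fun _ : α ↦ E) p} {C : ℝ} (hC : 0 ≤ C)
    (h : ∀ i, ‖x i‖ ≤ C * ‖y i‖) : ‖x‖ ≤ C * ‖y‖ := by
  rw [← norm_toNorm, ← norm_toNorm (x := y), ← abs_of_nonneg hC, ← Real.norm_eq_abs,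
    ← norm_const_smul (zero_lt_one.trans_le Fact.out).ne']
  exact norm_mono (zero_lt_one.trans_le Fact.out).ne' fun i ↦ by simpa [abs_of_nonneg hC] using h i

variable (𝕜 : Type*) [NontriviallyNormedField 𝕜] [NormedSpace 𝕜 E]

def compEquiv (e : β ≃ α) : lp (fun _ : α ↦ E) p →ₗᵢ[𝕜] lp (fun _ : β ↦ E) p where
  toFun x := ⟨x ∘ e, (lp.memℓp x).comp_equiv e⟩
  map_add' _ _ := rfl
  map_smul' _ _ := rfl
  norm_map' x := by
    obtain rfl | rfl | hp := p.trichotomy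
    · exact absurd (Fact.out : (1 : ℝ≥0∞) ≤ 0) (by simp)
    · simp only [norm_eq_ciSup]
      exact e.iSup_comp (g := fun i ↦ ‖x i‖)
    · simp only [norm_eq_tsum_rpow hp]
      exact congrArg (· ^ (1 / p.toReal)) (e.tsum_eq fun i ↦ ‖x i‖ ^ p.toReal)

@[simp]
theorem compEquiv_apply (e : β ≃ α) (x : lp (fun _ : α ↦ E) p) (i : β) :
    compEquiv 𝕜 e x i = x (e i) := rfl

variable {𝕜}

def superposition (g : E → E) (hg0 : g 0 = 0)
    (hg : ∀ r, ∃ K, LipschitzOnWith K g (closedBall 0 r)) (x : lp (fun _ : α ↦ E) p) :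
    lp (fun _ : α ↦ E) p :=
  ⟨g ∘ x, (lp.memℓp x).comp_of_lipschitzOnWith (hg ‖x‖).choose_spec hg0
    (norm_apply_le_norm (zero_lt_one.trans_le Fact.out).ne' x)⟩

@[simp]
theorem superposition_apply (g : E → E) (hg0 : g 0 = 0)
    (hg : ∀ r, ∃ K, LipschitzOnWith K g (closedBall 0 r)) (x : lp (fun _ : α ↦ E) p) (i : α) :
    superposition g hg0 hg x i = g (x i) := rfl

@[simp]
theorem superposition_zero (g : E → E) (hg0 : g 0 = 0)
    (hg : ∀ r, ∃ K, LipschitzOnWith K g (closedBall 0 r)) :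
    superposition g hg0 hg (0 : lp (fun _ : α ↦ E) p) = 0 := by
  ext i
  simp [hg0]

theorem lipschitzOnWith_superposition {g : E → E} (hg0 : g 0 = 0)
    (hg : ∀ r, ∃ K, LipschitzOnWith K g (closedBall 0 r)) {K : ℝ≥0} {r : ℝ}
    (hK : LipschitzOnWith K g (closedBall 0 r)) :
    LipschitzOnWith K (superposition (α := α) (p := p) g hg0 hg) (closedBall 0 r) := by
  refine LipschitzOnWith.of_dist_le_mul fun x hx y hy ↦ ?_
  rw [dist_eq_norm, dist_eq_norm]
  refine norm_le_mul_of_forall_norm_le K.coe_nonneg fun i ↦ ?_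
  have hp : p ≠ 0 := (zero_lt_one.trans_le Fact.out).ne'
  exact hK.norm_sub_le
    (mem_closedBall_zero_iff.2 ((norm_apply_le_norm hp x i).trans (mem_closedBall_zero_iff.1 hx)))
    (mem_closedBall_zero_iff.2 ((norm_apply_le_norm hp y i).trans (mem_closedBall_zero_iff.1 hy)))

end lp

section AutonomousODE

variable {E : Type*} [NormedAddCommGroup E] [NormedSpace ℝ E] {F : E → E} {γ γ' : ℝ → E}
  {T R M : ℝ} {K : ℝ≥0}

theorem IsIntegralCurveOn.comp_neg_Icc (hγ : IsIntegralCurveOn γ (fun _ ↦ F) (Icc (-T) T)) :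
    IsIntegralCurveOn (fun t ↦ γ (-t)) (fun _ ↦ -F) (Icc (-T) T) := fun t ht ↦ by
  have hmaps : MapsTo Neg.neg (Icc (-T) T) (Icc (-T) T) := fun s hs ↦
    ⟨neg_le_neg hs.2, by linarith [hs.1]⟩
  simpa [Function.comp_def] using
    (hγ (-t) (hmaps ht)).scomp t (hasDerivAt_neg t).hasDerivWithinAt hmaps

theorem IsIntegralCurveOn.hasDerivWithinAt_Ici {v : ℝ → E → E} {a b t : ℝ}
    (hγ : IsIntegralCurveOn γ v (Icc a b)) (ht : t ∈ Ico a b) :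
    HasDerivWithinAt γ (v t (γ t)) (Ici t) t :=
  (hγ t (Ico_subset_Icc_self ht)).mono_of_mem_nhdsWithin (Icc_mem_nhdsGE_of_mem ht)

theorem IsIntegralCurveOn.norm_le_two_mul_of_Icc_zero
    (hγ : IsIntegralCurveOn γ (fun _ ↦ F) (Icc 0 T)) (hF : ∀ x, ‖x‖ ≤ 2 * R → ‖F x‖ ≤ M)
    (hT : (M + 1) * T ≤ R) (h0 : ‖γ 0‖ ≤ R) : ∀ t ∈ Icc 0 T, ‖γ t‖ ≤ 2 * R := by
  have hR : 0 ≤ R := (norm_nonneg _).trans h0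
  have hM : 0 ≤ M := (norm_nonneg _).trans (hF 0 (by simpa using hR))
  -- the barrier `R + (M + 1) t` is never reached, since there `‖γ'‖ ≤ M < M + 1`
  have barrier : ∀ t ∈ Icc 0 T, ‖γ t‖ ≤ R + (M + 1) * t :=
    image_norm_le_of_norm_deriv_right_lt_deriv_boundary hγ.continuousOn
      (fun t ht ↦ hγ.hasDerivWithinAt_Ici ht) (by simpa using h0)
      (fun t ↦ ((hasDerivAt_id t).const_mul (M + 1)).const_add R |>.congr_deriv (mul_one _))
      fun t ht hγt ↦ (hF _ (by nlinarith [ht.2])).trans_lt (lt_add_one M)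
  intro t ht
  nlinarith [barrier t ht, ht.2]

theorem IsIntegralCurveOn.norm_le_two_mul (hγ : IsIntegralCurveOn γ (fun _ ↦ F) (Icc (-T) T))
    (hF : ∀ x, ‖x‖ ≤ 2 * R → ‖F x‖ ≤ M) (hT : (M + 1) * T ≤ R) (h0 : ‖γ 0‖ ≤ R) :
    ∀ t ∈ Icc (-T) T, ‖γ t‖ ≤ 2 * R := by
  intro t ht
  have hsub : Icc 0 T ⊆ Icc (-T) T := Icc_subset_Icc (by linarith [ht.1, ht.2]) le_rfl
  rcases le_total 0 t with h | h
  · exact (hγ.mono hsub).norm_le_two_mul_of_Icc_zero hF hT h0 t ⟨h, ht.2⟩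
  · simpa using (hγ.comp_neg_Icc.mono hsub).norm_le_two_mul_of_Icc_zero
      (fun x hx ↦ by simpa using hF x hx) hT (by simpa using h0) (-t)
      ⟨by linarith, by linarith [ht.1]⟩

theorem IsIntegralCurveOn.dist_le_of_Icc_zero {s : Set E} (hF : LipschitzOnWith K F s)
    (hγ : IsIntegralCurveOn γ (fun _ ↦ F) (Icc 0 T))
    (hγ' : IsIntegralCurveOn γ' (fun _ ↦ F) (Icc 0 T))
    (hγs : ∀ t ∈ Icc 0 T, γ t ∈ s) (hγ's : ∀ t ∈ Icc 0 T, γ' t ∈ s) :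
    ∀ t ∈ Icc 0 T, dist (γ t) (γ' t) ≤ dist (γ 0) (γ' 0) * exp (K * t) := by
  simpa using dist_le_of_trajectories_ODE_of_mem (fun _ _ ↦ hF) hγ.continuousOn
    (fun t ht ↦ hγ.hasDerivWithinAt_Ici ht) (fun t ht ↦ hγs t (Ico_subset_Icc_self ht))
    hγ'.continuousOn (fun t ht ↦ hγ'.hasDerivWithinAt_Ici ht)
    (fun t ht ↦ hγ's t (Ico_subset_Icc_self ht)) le_rfl

theorem IsIntegralCurveOn.dist_le_mul_exp_abs {s : Set E} (hF : LipschitzOnWith K F s)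
    (hγ : IsIntegralCurveOn γ (fun _ ↦ F) (Icc (-T) T))
    (hγ' : IsIntegralCurveOn γ' (fun _ ↦ F) (Icc (-T) T))
    (hγs : ∀ t ∈ Icc (-T) T, γ t ∈ s) (hγ's : ∀ t ∈ Icc (-T) T, γ' t ∈ s) :
    ∀ t ∈ Icc (-T) T, dist (γ t) (γ' t) ≤ dist (γ 0) (γ' 0) * exp (K * |t|) := by
  intro t ht
  have hsub : Icc 0 T ⊆ Icc (-T) T := Icc_subset_Icc (by linarith [ht.1, ht.2]) le_rfl
  have hneg : ∀ t ∈ Icc 0 T, -t ∈ Icc (-T) T := fun t ht ↦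
    ⟨by linarith [ht.2], by linarith [ht.1, ht.2]⟩
  rcases le_total 0 t with h | h
  · simpa [abs_of_nonneg h] using (hγ.mono hsub).dist_le_of_Icc_zero hF (hγ'.mono hsub)
      (fun t ht ↦ hγs t (hsub ht)) (fun t ht ↦ hγ's t (hsub ht)) t ⟨h, ht.2⟩
  · simpa [abs_of_nonpos h] using (hγ.comp_neg_Icc.mono hsub).dist_le_of_Icc_zero hF.neg
      (hγ'.comp_neg_Icc.mono hsub) (fun t ht ↦ hγs _ (hneg t ht)) (fun t ht ↦ hγ's _ (hneg t ht))
      (-t) ⟨by linarith, by linarith [ht.1]⟩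

theorem exists_isIntegralCurveOn_Icc [CompleteSpace E] (hF0 : F 0 = 0)
    (hF : LipschitzOnWith K F (closedBall 0 (2 * R))) (hT0 : 0 ≤ T) (hT : (K * (2 * R) + 1) * T ≤ R)
    {x₀ : E} (hx₀ : ‖x₀‖ ≤ R) : ∃ γ, γ 0 = x₀ ∧ IsIntegralCurveOn γ (fun _ ↦ F) (Icc (-T) T) := by
  have hR : 0 ≤ R := (norm_nonneg _).trans hx₀
  have hball : closedBall x₀ R ⊆ closedBall 0 (2 * R) :=
    closedBall_subset_closedBall' (by rw [dist_zero_right]; linarith)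
  have hPL : IsPicardLindelof (fun _ ↦ F) (⟨0, by simp [hT0]⟩ : Icc (-T) T) x₀ R.toNNReal 0
      (K * (2 * R)).toNNReal K := by
    refine .of_time_independent (fun x hx ↦ ?_) (hF.mono (by simpa [hR] using hball)) ?_
    · rw [Real.coe_toNNReal _ (by positivity)]
      have hx2 : ‖x‖ ≤ 2 * R := mem_closedBall_zero_iff.1 (hball (by simpa [hR] using hx))
      exact (hF.norm_le_mul_norm hF0 hx2).trans (by gcongr)
    · rw [Real.coe_toNNReal _ (by positivity), Real.coe_toNNReal _ hR]
      simp only [sub_zero, zero_sub, neg_neg, max_self, NNReal.coe_zero]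
      nlinarith
  exact hPL.exists_eq_forall_mem_Icc_hasDerivWithinAt₀

theorem IsIntegralCurveOn.dist_le_mul_exp_of_norm_le (hF0 : F 0 = 0)
    (hF : LipschitzOnWith K F (closedBall 0 (2 * R))) (hT : (K * (2 * R) + 1) * T ≤ R)
    (hγ : IsIntegralCurveOn γ (fun _ ↦ F) (Icc (-T) T))
    (hγ' : IsIntegralCurveOn γ' (fun _ ↦ F) (Icc (-T) T)) (h0 : ‖γ 0‖ ≤ R) (h0' : ‖γ' 0‖ ≤ R) :
    ∀ t ∈ Icc (-T) T, dist (γ t) (γ' t) ≤ dist (γ 0) (γ' 0) * exp (K * T) := by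
  have hbound (x : E) (hx : ‖x‖ ≤ 2 * R) : ‖F x‖ ≤ K * (2 * R) :=
    (hF.norm_le_mul_norm hF0 hx).trans (by gcongr)
  have hγs := hγ.norm_le_two_mul hbound hT h0
  have hγ's := hγ'.norm_le_two_mul hbound hT h0'
  intro t ht
  refine (hγ.dist_le_mul_exp_abs hF hγ' (fun t ht ↦ mem_closedBall_zero_iff.2 (hγs t ht))
    (fun t ht ↦ mem_closedBall_zero_iff.2 (hγ's t ht)) t ht).trans ?_
  gcongr
  exact abs_le.2 ht

end AutonomousODE

section DNLS

variable {d : ℕ} {p : ℝ≥0∞} [Fact (1 ≤ p)]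

def latticeShift (m : ZLat d) : lp (fun _ : ZLat d ↦ ℂ) p →L[ℂ] lp (fun _ : ZLat d ↦ ℂ) p :=
  (lp.compEquiv ℂ (Equiv.addRight m)).toContinuousLinearMap

def discLapCLM (d : ℕ) (h : ℝ) : lp (fun _ : ZLat d ↦ ℂ) p →L[ℂ] lp (fun _ : ZLat d ↦ ℂ) p :=
  ((h : ℂ) ^ 2)⁻¹ • ∑ j : Fin d,
    (latticeShift (latE j) + latticeShift (-latE j) - (2 : ℂ) • ContinuousLinearMap.id ℂ _)

theorem discLapCLM_apply (h : ℝ) (x : lp (fun _ : ZLat d ↦ ℂ) p) (n : ZLat d) :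
    discLapCLM d h x n = discLapC d h x n := by
  simp only [discLapCLM, FunLike.coe_smul, FunLike.coe_sum, FunLike.coe_sub, FunLike.coe_add,
    Pi.smul_apply, Finset.sum_apply, Pi.add_apply, Pi.sub_apply, lp.coeFn_smul, lp.coeFn_sum,
    lp.coeFn_add, lp.coeFn_sub]
  simp [latticeShift, discLapC, div_eq_inv_mul, sub_eq_add_neg]

def potentialCLM {α : Type*} (V : α → ℝ) {CV : ℝ} (hV : ∀ n, |V n| ≤ CV) :
    lp (fun _ : α ↦ ℂ) p →L[ℂ] lp (fun _ : α ↦ ℂ) p :=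
  -- bounded by `|CV|`, since `CV` itself may be negative when `α` is empty
  lp.mapCLM p (fun n ↦ (V n : ℂ) • ContinuousLinearMap.id ℂ ℂ) (abs_nonneg CV)
    fun n ↦ calc
      ‖(V n : ℂ) • ContinuousLinearMap.id ℂ ℂ‖
          ≤ ‖(V n : ℂ)‖ * ‖ContinuousLinearMap.id ℂ ℂ‖ := ContinuousLinearMap.opNorm_smul_le _ _
      _ ≤ ‖(V n : ℂ)‖ * 1 := by gcongr; exact ContinuousLinearMap.norm_id_le
      _ ≤ |CV| := by simpa using (hV n).trans (le_abs_self CV)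

def dnlsField (h σ lam : ℝ) (hσ : 0 ≤ σ) (V : ZLat d → ℝ) {CV : ℝ} (hV : ∀ n, |V n| ≤ CV)
    (x : lp (fun _ : ZLat d ↦ ℂ) p) : lp (fun _ : ZLat d ↦ ℂ) p :=
  -Complex.I • (discLapCLM d h x - potentialCLM V hV x - (lam : ℂ) •
    lp.superposition (fun z : ℂ ↦ ‖z‖ ^ (2 * σ) • z) (by simp)
      (exists_lipschitzOnWith_norm_rpow_smul (by positivity)) x)

variable {h σ lam : ℝ} (hσ : 0 ≤ σ) {V : ZLat d → ℝ} {CV : ℝ} (hV : ∀ n, |V n| ≤ CV)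

theorem dnlsField_zero : dnlsField h σ lam hσ V hV (0 : lp (fun _ : ZLat d ↦ ℂ) p) = 0 := by
  ext n
  simp [dnlsField, lp.superposition_zero]

theorem exists_lipschitzOnWith_dnlsField (r : ℝ) :
    ∃ K, LipschitzOnWith K (dnlsField (p := p) h σ lam hσ V hV) (closedBall 0 r) := by
  obtain ⟨K, hK⟩ := exists_lipschitzOnWith_norm_rpow_smul (E := ℂ) (by positivity : 0 ≤ 2 * σ) r
  have hlin := (discLapCLM (p := p) d h).lipschitz.lipschitzOnWith (s := closedBall 0 r) |>.sub
    (potentialCLM V hV).lipschitz.lipschitzOnWith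
  exact ⟨_, (lipschitzWith_smul _).comp_lipschitzOnWith <| hlin.sub <|
    (lipschitzWith_smul _).comp_lipschitzOnWith (lp.lipschitzOnWith_superposition _ _ hK)⟩

theorem continuous_dnlsField : Continuous (dnlsField (p := p) h σ lam hσ V hV) :=
  LocallyLipschitz.continuous fun x ↦
    have ⟨K, hK⟩ := exists_lipschitzOnWith_dnlsField (p := p) (h := h) (lam := lam) hσ hV
      (‖x‖ + 1)
    ⟨K, _, closedBall_mem_nhds_of_mem (by simp), hK⟩

theorem eq_dnlsField_iff (x x' : lp (fun _ : ZLat d ↦ ℂ) p) :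
    x' = dnlsField h σ lam hσ V hV x ↔ ∀ n, Complex.I * x' n - discLapC d h x n
      + (V n : ℂ) * x n + (lam : ℂ) * ((‖x n‖ ^ (2 * σ) : ℝ) : ℂ) * x n = 0 := by
  simp only [lp.ext_iff, funext_iff]
  refine forall_congr' fun n ↦ ?_
  have key (a b : ℂ) : a = -Complex.I * b ↔ Complex.I * a - b = 0 := by
    constructor <;> intro hab
    · linear_combination Complex.I * hab - b * Complex.I_sq
    · linear_combination -Complex.I * hab + a * Complex.I_sq
  simp only [dnlsField, lp.coeFn_smul, lp.coeFn_sub, Pi.smul_apply, Pi.sub_apply,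
    discLapCLM_apply, potentialCLM, lp.mapCLM_apply_coe, lp.superposition_apply, smul_eq_mul,
    FunLike.coe_smul, ContinuousLinearMap.id_apply, key, Complex.real_smul]
  constructor <;> intro H <;> linear_combination H

theorem IsDNLSSolutionOn.isIntegralCurveOn {S : Set ℝ} {u u' : ℝ → lp (fun _ : ZLat d ↦ ℂ) p}
    (hu : IsDNLSSolutionOn d h σ lam V p S u u') :
    IsIntegralCurveOn u (fun _ ↦ dnlsField h σ lam hσ V hV) S := fun t ht ↦ by
  simpa only [(eq_dnlsField_iff hσ hV (u t) (u' t)).2 (hu.2.2 t ht)] using hu.1 t ht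

theorem IsIntegralCurveOn.isDNLSSolutionOn {S : Set ℝ} {u : ℝ → lp (fun _ : ZLat d ↦ ℂ) p}
    (hu : IsIntegralCurveOn u (fun _ ↦ dnlsField h σ lam hσ V hV) S) :
    IsDNLSSolutionOn d h σ lam V p S u (dnlsField h σ lam hσ V hV ∘ u) :=
  ⟨hu, (continuous_dnlsField hσ hV).comp_continuousOn hu.continuousOn,
    fun _ _ ↦ (eq_dnlsField_iff hσ hV _ _).1 rfl⟩

end DNLS

theorem dnls_local_wellposedness_general
    (d : ℕ) (h : ℝ) (σ : ℝ) (hσ : 0 < σ)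
    (lam : ℝ) (p : ℝ≥0∞) [Fact (1 ≤ p)]
    (V : ZLat d → ℝ) (CV : ℝ) (hV : ∀ n, |V n| ≤ CV) :
    (∀ R : ℝ, 0 < R → ∃ T : ℝ, 0 < T ∧
      ∀ u₀ : lp (fun _ : ZLat d => ℂ) p, ‖u₀‖ ≤ R →
        (∃ u u' : ℝ → lp (fun _ : ZLat d => ℂ) p,
          IsDNLSSolutionOn d h σ lam V p (Set.Icc (-T) T) u u' ∧ u 0 = u₀) ∧
        (∀ u u' v v' : ℝ → lp (fun _ : ZLat d => ℂ) p,
          IsDNLSSolutionOn d h σ lam V p (Set.Icc (-T) T) u u' →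
          IsDNLSSolutionOn d h σ lam V p (Set.Icc (-T) T) v v' →
          u 0 = u₀ → v 0 = u₀ → Set.EqOn u v (Set.Icc (-T) T)))
    ∧
    (∀ R : ℝ, 0 < R → ∃ T : ℝ, 0 < T ∧ ∃ L : ℝ, 0 < L ∧
      ∀ u₀ v₀ : lp (fun _ : ZLat d => ℂ) p, ‖u₀‖ ≤ R → ‖v₀‖ ≤ R →
        ∀ u u' v v' : ℝ → lp (fun _ : ZLat d => ℂ) p,
          IsDNLSSolutionOn d h σ lam V p (Set.Icc (-T) T) u u' →
          IsDNLSSolutionOn d h σ lam V p (Set.Icc (-T) T) v v' →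
          u 0 = u₀ → v 0 = v₀ →
          ∀ t ∈ Set.Icc (-T) T, ‖u t - v t‖ ≤ L * ‖u₀ - v₀‖) := by
  set F := dnlsField (p := p) h σ lam hσ.le V hV
  have hF0 : F 0 = 0 := dnlsField_zero (p := p) hσ.le hV
  have exists_time (R : ℝ) (hR : 0 < R) : ∃ K : ℝ≥0, ∃ T, 0 < T ∧
      LipschitzOnWith K F (closedBall 0 (2 * R)) ∧ (K * (2 * R) + 1) * T ≤ R := by
    obtain ⟨K, hK⟩ :=
      exists_lipschitzOnWith_dnlsField (p := p) (h := h) (lam := lam) hσ.le hV (2 * R)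
    exact ⟨K, R / (K * (2 * R) + 1), by positivity, hK, (mul_div_cancel₀ _ (by positivity)).le⟩
  refine ⟨fun R hR ↦ ?_, fun R hR ↦ ?_⟩
  · obtain ⟨K, T, hT, hK, hKT⟩ := exists_time R hR
    refine ⟨T, hT, fun u₀ hu₀ ↦ ⟨?_, fun u u' v v' hu hv hu0 hv0 t ht ↦ ?_⟩⟩
    · obtain ⟨u, hu0, hu⟩ := exists_isIntegralCurveOn_Icc hF0 hK hT.le hKT hu₀
      exact ⟨u, _, hu.isDNLSSolutionOn hσ.le hV, hu0⟩
    · have := (hu.isIntegralCurveOn hσ.le hV).dist_le_mul_exp_of_norm_le hF0 hK hKT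
        (hv.isIntegralCurveOn hσ.le hV) (hu0 ▸ hu₀) (hv0 ▸ hu₀) t ht
      rw [hu0, hv0, dist_self, zero_mul] at this
      exact dist_le_zero.1 this
  · obtain ⟨K, T, hT, hK, hKT⟩ := exists_time R hR
    refine ⟨T, hT, exp (K * T), exp_pos _, fun u₀ v₀ hu₀ hv₀ u u' v v' hu hv hu0 hv0 t ht ↦ ?_⟩
    have := (hu.isIntegralCurveOn hσ.le hV).dist_le_mul_exp_of_norm_le hF0 hK hKT
      (hv.isIntegralCurveOn hσ.le hV) (hu0 ▸ hu₀) (hv0 ▸ hv₀) t ht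
    rwa [hu0, hv0, dist_eq_norm, dist_eq_norm, mul_comm] at this

/-- **Local well-posedness of the discrete NLS in `l^p_h`.**
For every bounded real potential `V`, every `σ > 0`, `λ = ±1`, `1 ≤ p ≤ ∞`:
(i)–(ii) for every radius `R` there is a time `T > 0` (depending only on the data and `R`)
such that for every initial datum of norm at most `R` there is a solution on `[−T,T]`,
unique among continuously differentiable `l^p_h`-valued maps; (iii) the solution map is
Lipschitz continuous on balls. -/
theorem dnls_local_wellposedness
    (d : ℕ) (hd : 1 ≤ d) (h : ℝ) (hh : 0 < h) (σ : ℝ) (hσ : 0 < σ)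
    (lam : ℝ) (hlam : lam = 1 ∨ lam = -1) (p : ℝ≥0∞) [Fact (1 ≤ p)]
    (V : ZLat d → ℝ) (CV : ℝ) (hV : ∀ n, |V n| ≤ CV) :
    (∀ R : ℝ, 0 < R → ∃ T : ℝ, 0 < T ∧
      ∀ u₀ : lp (fun _ : ZLat d => ℂ) p, ‖u₀‖ ≤ R →
        (∃ u u' : ℝ → lp (fun _ : ZLat d => ℂ) p,
          IsDNLSSolutionOn d h σ lam V p (Set.Icc (-T) T) u u' ∧ u 0 = u₀) ∧
        (∀ u u' v v' : ℝ → lp (fun _ : ZLat d => ℂ) p,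
          IsDNLSSolutionOn d h σ lam V p (Set.Icc (-T) T) u u' →
          IsDNLSSolutionOn d h σ lam V p (Set.Icc (-T) T) v v' →
          u 0 = u₀ → v 0 = u₀ → Set.EqOn u v (Set.Icc (-T) T)))
    ∧
    (∀ R : ℝ, 0 < R → ∃ T : ℝ, 0 < T ∧ ∃ L : ℝ, 0 < L ∧
      ∀ u₀ v₀ : lp (fun _ : ZLat d => ℂ) p, ‖u₀‖ ≤ R → ‖v₀‖ ≤ R →
        ∀ u u' v v' : ℝ → lp (fun _ : ZLat d => ℂ) p,
          IsDNLSSolutionOn d h σ lam V p (Set.Icc (-T) T) u u' →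
          IsDNLSSolutionOn d h σ lam V p (Set.Icc (-T) T) v v' →
          u 0 = u₀ → v 0 = v₀ →
          ∀ t ∈ Set.Icc (-T) T, ‖u t - v t‖ ≤ L * ‖u₀ - v₀‖) :=
  dnls_local_wellposedness_general d h σ hσ lam p V CV hV
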